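/- Let (W,S) be a finite Coxeter system with longest element w₀, and let I, J ⊆ S. Then P^I(P^J(w₀)) = w₀^{I∪J} · P^I(P^J(w₀(I∪J))), where w₀(I∪J) is the longest element of W_{I∪J} and w₀^{I∪J} = P^{I∪J}(w₀). -/

import Mathlib

open CoxeterSystem

variable {B W : Type*} [Group W] {M : CoxeterMatrix B}

/-- The standard parabolic subgroup `W_J`. -/
def CoxeterSystem.parabolic (cs : CoxeterSystem M W) (J : Set B) : Subgroup W :=
  Subgroup.closure (cs.simple '' J)

/-- The set of minimal-length left coset representatives `W^J`. -/
def CoxeterSystem.minReps (cs : CoxeterSystem M W) (J : Set B) : Set W :=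
  {w : W | ∀ s ∈ J, cs.length w < cs.length (w * cs.simple s)}

/-- `P` is the family of parabolic projections `P^J : W → W`, `w ↦ w^J`. -/
def CoxeterSystem.IsProjFamily (cs : CoxeterSystem M W) (P : Set B → W → W) : Prop :=
  ∀ (J : Set B) (w : W), P J w ∈ cs.minReps J ∧ (P J w)⁻¹ * w ∈ cs.parabolic J

/-!
Write `w₀ = u * v` with `u = P^{I ∪ J} w₀` and `v ∈ W_{I ∪ J}`. Lengths add along the coset
`u W_{I ∪ J}` of a minimal representative `u`, so `v` is a longest element of `W_{I ∪ J}`, hence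
`v = w₀(I ∪ J)`. For `J ⊆ K`, `u ∈ W^K` and `a ∈ W_K` one has `P^J (u a) = u P^J a`; applying
this twice gives `P^I (P^J (u v)) = u P^I (P^J v)`.

Length additivity and the uniqueness of the longest element rest on the exchange property, which
comes from Tits' permutation representation of `W` on `W × ZMod 2`: the parity of the number of
occurrences of a reflection `t` in the right inversion sequence of a word for `w` does not depend
on the word, and it is odd exactly when `ℓ (w t) < ℓ w`.
-/

theorem ZMod.eq_zero_or_eq_one_of_two (x : ZMod 2) : x = 0 ∨ x = 1 := by
  revert x
  decide

namespace CoxeterSystem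

variable (cs : CoxeterSystem M W)

local prefix:100 "s" => cs.simple
local prefix:100 "π" => cs.wordProd
local prefix:100 "ℓ" => cs.length
local prefix:100 "ris" => cs.rightInvSeq
local prefix:100 "lis" => cs.leftInvSeq

theorem alternatingWord_two_mul_succ (i j : B) (n : ℕ) :
    alternatingWord i j (2 * (n + 1)) = i :: j :: alternatingWord i j (2 * n) := by
  rw [show 2 * (n + 1) = 2 * n + 1 + 1 by ring, alternatingWord_succ', alternatingWord_succ']
  simp

theorem reverse_alternatingWord_two_mul (i j : B) (n : ℕ) :
    (alternatingWord i j (2 * n)).reverse = alternatingWord j i (2 * n) := by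
  induction n with
  | zero => rfl
  | succ n ih =>
    rw [alternatingWord_two_mul_succ, show 2 * (n + 1) = 2 * n + 1 + 1 by ring,
      alternatingWord_succ, alternatingWord_succ]
    simp [ih]

/-- The right inversion sequence of `(i j)^(M i j)` lists the reflections `s j (s i s j)^k`,
`k < M i j`, twice. -/
theorem even_count_rightInvSeq_alternatingWord [DecidableEq W] (i j : B) (t : W) :
    Even ((ris (alternatingWord i j (2 * M i j))).count t) := by
  set f : ℕ → W := fun k => s j * (s i * s j) ^ k
  have hlis : lis (alternatingWord j i (2 * M i j)) = (List.range (2 * M i j)).map f := by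
    refine List.ext_getElem (by simp) fun k hk _ => ?_
    rw [getElem_leftInvSeq_alternatingWord _ _ _ _ _ (by simpa using hk),
      prod_alternatingWord_eq_mul_pow]
    simp [f, Nat.mul_add_div]
  have hf : f ∘ (M i j + ·) = f := by
    funext k
    simp [f, pow_add, cs.simple_mul_simple_pow]
  rw [← List.count_reverse, ← leftInvSeq_reverse, reverse_alternatingWord_two_mul, hlis, two_mul,
    List.range_add, List.map_append, List.map_map, hf, List.count_append]
  exact ⟨_, rfl⟩

theorem parabolic_mono {J K : Set B} (h : J ⊆ K) : cs.parabolic J ≤ cs.parabolic K :=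
  Subgroup.closure_mono (Set.image_mono h)

theorem simple_mem_parabolic {K : Set B} {i : B} (hi : i ∈ K) : s i ∈ cs.parabolic K :=
  Subgroup.subset_closure ⟨i, hi, rfl⟩

theorem wordProd_mem_parabolic {K : Set B} {ω : List B} (hω : ∀ i ∈ ω, i ∈ K) :
    π ω ∈ cs.parabolic K := by
  rw [wordProd]
  exact list_prod_mem (by simpa using fun i hi => cs.simple_mem_parabolic (hω i hi))

theorem exists_wordProd_eq_of_mem_parabolic {K : Set B} {z : W} (hz : z ∈ cs.parabolic K) :
    ∃ ω : List B, (∀ i ∈ ω, i ∈ K) ∧ π ω = z := by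
  induction hz using Subgroup.closure_induction with
  | mem x hx =>
    obtain ⟨i, hi, rfl⟩ := hx
    exact ⟨[i], by simpa using hi, wordProd_singleton ..⟩
  | one => exact ⟨[], by simp, rfl⟩
  | mul x y _ _ hx hy =>
    obtain ⟨ω₁, h₁, rfl⟩ := hx
    obtain ⟨ω₂, h₂, rfl⟩ := hy
    exact ⟨ω₁ ++ ω₂, by simpa [or_imp, forall_and] using ⟨h₁, h₂⟩, wordProd_append ..⟩
  | inv x _ hx =>
    obtain ⟨ω, h, rfl⟩ := hx
    exact ⟨ω.reverse, by simpa using h, wordProd_reverse ..⟩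

theorem mem_parabolic_of_mem_rightInvSeq {K : Set B} {ω : List B} (hω : ∀ i ∈ ω, i ∈ K) {t : W}
    (ht : t ∈ ris ω) : t ∈ cs.parabolic K := by
  induction ω with
  | nil => simp at ht
  | cons i ω ih =>
    have hπ := cs.wordProd_mem_parabolic fun j hj => hω j (List.mem_cons_of_mem i hj)
    rcases List.mem_cons.mp ht with rfl | ht
    · exact mul_mem (mul_mem (inv_mem hπ) (cs.simple_mem_parabolic (hω i List.mem_cons_self))) hπ
    · exact ih (fun j hj => hω j (List.mem_cons_of_mem i hj)) ht

section TitsRepresentation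

variable [DecidableEq W]

def titsPerm (i : B) : Equiv.Perm (W × ZMod 2) :=
  Function.Involutive.toPerm (fun p => (s i * p.1 * s i, p.2 + if p.1 = s i then 1 else 0))
    (by
      rintro ⟨t, e⟩
      have hconj : s i * t * s i = s i ↔ t = s i := by
        constructor
        · intro h
          simpa [mul_assoc] using congrArg (fun x => s i * x * s i) h
        · rintro rfl
          simp
      simp only [hconj, add_assoc, ← two_mul, Prod.mk.injEq]
      refine ⟨by simp [mul_assoc], ?_⟩
      rw [show (2 : ZMod 2) = 0 from rfl, zero_mul, add_zero])

theorem titsPerm_apply (i : B) (t : W) (e : ZMod 2) :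
    cs.titsPerm i (t, e) = (s i * t * s i, e + if t = s i then 1 else 0) :=
  rfl

theorem prod_map_titsPerm_apply (ω : List B) (t : W) (e : ZMod 2) :
    (ω.map cs.titsPerm).prod (t, e) = (π ω * t * (π ω)⁻¹, e + (ris ω).count t) := by
  induction ω with
  | nil => simp
  | cons i ω ih =>
    have hconj : π ω * t * (π ω)⁻¹ = s i ↔ (π ω)⁻¹ * s i * π ω = t := by
      constructor <;> rintro h <;> rw [← h] <;> group
    rw [List.map_cons, List.prod_cons, Equiv.Perm.mul_apply, ih, titsPerm_apply, rightInvSeq,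
      List.count_cons, wordProd_cons]
    simp only [hconj, beq_iff_eq]
    refine Prod.ext (by simp [mul_assoc]) ?_
    push_cast
    ring

theorem titsPerm_mul_pow_eq_one (i j : B) : (cs.titsPerm i * cs.titsPerm j) ^ M i j = 1 := by
  have hword : ∀ n, (cs.titsPerm i * cs.titsPerm j) ^ n =
      ((alternatingWord i j (2 * n)).map cs.titsPerm).prod := by
    intro n
    induction n with
    | zero => rfl
    | succ n ih => rw [pow_succ', ih, alternatingWord_two_mul_succ]; simp [mul_assoc]
  ext ⟨t, e⟩ : 1
  rw [hword, prod_map_titsPerm_apply, prod_alternatingWord_eq_mul_pow,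
    (cs.even_count_rightInvSeq_alternatingWord i j t).natCast_zmod_two]
  simp [cs.simple_mul_simple_pow]

def titsRep : W →* Equiv.Perm (W × ZMod 2) :=
  cs.lift ⟨cs.titsPerm, cs.titsPerm_mul_pow_eq_one⟩

theorem titsRep_wordProd_apply (ω : List B) (t : W) (e : ZMod 2) :
    cs.titsRep (π ω) (t, e) = (π ω * t * (π ω)⁻¹, e + (ris ω).count t) := by
  rw [← prod_map_titsPerm_apply, wordProd, map_list_prod, List.map_map]
  congr 3
  funext i
  exact cs.lift_apply_simple _ i

/-- The parity of the number of occurrences of `t` in the right inversion sequence of any word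
for `w`; see `inversionParity_wordProd`. -/
def inversionParity (w t : W) : ZMod 2 :=
  (cs.titsRep w (t, 0)).2

theorem inversionParity_wordProd (ω : List B) (t : W) :
    cs.inversionParity (π ω) t = (ris ω).count t := by
  rw [inversionParity, titsRep_wordProd_apply, zero_add]

theorem titsRep_apply (w t : W) (e : ZMod 2) :
    cs.titsRep w (t, e) = (w * t * w⁻¹, e + cs.inversionParity w t) := by
  obtain ⟨ω, rfl⟩ := cs.wordProd_surjective w
  rw [titsRep_wordProd_apply, inversionParity_wordProd]

theorem inversionParity_one (t : W) : cs.inversionParity 1 t = 0 := by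
  rw [inversionParity, map_one]
  rfl

theorem inversionParity_mul (u v t : W) :
    cs.inversionParity (u * v) t =
      cs.inversionParity v t + cs.inversionParity u (v * t * v⁻¹) := by
  rw [inversionParity, map_mul, Equiv.Perm.mul_apply, titsRep_apply, titsRep_apply, zero_add]

theorem inversionParity_self {t : W} (ht : cs.IsReflection t) : cs.inversionParity t t = 1 := by
  obtain ⟨v, i, rfl⟩ := ht
  -- the cocycle identity reduces `t = v * s i * v⁻¹` to `s i`, which has the word `[i]`
  have h₁ := cs.inversionParity_mul (v * s i) v⁻¹ (v * s i * v⁻¹)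
  have h₂ := cs.inversionParity_mul v (s i) (s i)
  have h₃ := cs.inversionParity_mul v v⁻¹ (v * s i * v⁻¹)
  have h₄ : cs.inversionParity (s i) (s i) = 1 := by
    simpa using cs.inversionParity_wordProd [i] (s i)
  rw [show v⁻¹ * (v * s i * v⁻¹) * v⁻¹⁻¹ = s i by group] at h₁ h₃
  rw [show s i * s i * (s i)⁻¹ = s i by group] at h₂
  rw [mul_inv_cancel, inversionParity_one] at h₃
  linear_combination h₁ + h₂ - h₃ + h₄

theorem mem_rightInvSeq_of_inversionParity_eq_one {ω : List B} {t : W}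
    (h : cs.inversionParity (π ω) t = 1) : t ∈ ris ω := by
  rw [inversionParity_wordProd] at h
  refine List.count_pos_iff.mp (Nat.pos_of_ne_zero fun h₀ => ?_)
  rw [h₀, Nat.cast_zero] at h
  exact zero_ne_one h

theorem inversionParity_eq_one_iff {w t : W} (ht : cs.IsReflection t) :
    cs.inversionParity w t = 1 ↔ ℓ (w * t) < ℓ w := by
  have descent : ∀ w, cs.inversionParity w t = 1 → ℓ (w * t) < ℓ w := by
    intro w h
    obtain ⟨ω, hω, rfl⟩ := cs.exists_isReduced w
    exact (cs.isRightInversion_of_mem_rightInvSeq hω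
      (cs.mem_rightInvSeq_of_inversionParity_eq_one h)).2
  refine ⟨descent w, fun hlt => ?_⟩
  rcases ZMod.eq_zero_or_eq_one_of_two (cs.inversionParity w t) with h | h
  · have hwt : cs.inversionParity (w * t) t = 1 := by
      rw [inversionParity_mul, cs.inversionParity_self ht, mul_inv_cancel_right, h, add_zero]
    have := descent _ hwt
    rw [mul_assoc, ht.mul_self, mul_one] at this
    omega
  · exact h

theorem inversionParity_eq_zero_iff {w t : W} (ht : cs.IsReflection t) :
    cs.inversionParity w t = 0 ↔ ℓ w < ℓ (w * t) :=
  calc cs.inversionParity w t = 0 ↔ cs.inversionParity w t ≠ 1 :=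
        ⟨fun h => h ▸ zero_ne_one, (ZMod.eq_zero_or_eq_one_of_two _).resolve_right⟩
    _ ↔ ¬ ℓ (w * t) < ℓ w := (cs.inversionParity_eq_one_iff ht).not
    _ ↔ ℓ w < ℓ (w * t) := by
      have := ht.length_mul_left_ne w
      exact ⟨fun h => by omega, fun h => by omega⟩

theorem eq_of_inversionParity_eq {u v : W}
    (h : ∀ t, cs.IsReflection t → cs.inversionParity u t = cs.inversionParity v t) : u = v := by
  have hno_descent : ∀ i, cs.inversionParity (v * u⁻¹) (s i) = 0 := by
    intro i
    have h₁ := cs.inversionParity_mul v u⁻¹ (s i)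
    have h₂ := cs.inversionParity_mul u u⁻¹ (s i)
    rw [mul_inv_cancel, inversionParity_one, h _ ((cs.isReflection_simple i).conj u⁻¹)] at h₂
    rw [h₁, h₂]
  by_contra hne
  obtain ⟨i, hi⟩ := cs.exists_rightDescent_of_ne_one (mul_inv_eq_one.not.mpr (Ne.symm hne))
  have := (cs.inversionParity_eq_one_iff (cs.isReflection_simple i)).mpr hi
  rw [hno_descent] at this
  exact zero_ne_one this

theorem mem_parabolic_of_inversionParity_eq_one {K : Set B} {z t : W}
    (hz : z ∈ cs.parabolic K) (h : cs.inversionParity z t = 1) : t ∈ cs.parabolic K := by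
  obtain ⟨ω, hωK, rfl⟩ := cs.exists_wordProd_eq_of_mem_parabolic hz
  exact cs.mem_parabolic_of_mem_rightInvSeq hωK (cs.mem_rightInvSeq_of_inversionParity_eq_one h)

end TitsRepresentation

theorem exists_isReduced_subset (ω : List B) : ∃ ρ ⊆ ω, cs.IsReduced ρ ∧ π ρ = π ω := by
  classical
  induction ω using List.reverseRecOn with
  | nil => exact ⟨[], List.Subset.refl _, by simp [IsReduced], rfl⟩
  | append_singleton ω i ih =>
    obtain ⟨ρ, hρω, hρ, hπ⟩ := ih
    have hωi : π (ω ++ [i]) = π ρ * s i := by rw [wordProd_append, wordProd_singleton, hπ]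
    have hsub : ρ ⊆ ω ++ [i] := List.Subset.trans hρω (List.subset_append_left _ _)
    rcases cs.length_mul_simple (π ρ) i with hlong | hshort
    · refine ⟨ρ ++ [i], List.append_subset.mpr ⟨hsub, List.subset_append_right _ _⟩, ?_, ?_⟩
      · rw [IsReduced, wordProd_append, wordProd_singleton, hlong, hρ, List.length_append,
          List.length_singleton]
      · rw [hωi, wordProd_append, wordProd_singleton]
    · -- strong exchange: `s i` occurs in the right inversion sequence of `ρ`
      have hdesc : cs.inversionParity (π ρ) (s i) = 1 :=
        (cs.inversionParity_eq_one_iff (cs.isReflection_simple i)).mpr (by omega)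
      obtain ⟨j, hj, hjt⟩ :=
        List.getElem_of_mem (cs.mem_rightInvSeq_of_inversionParity_eq_one hdesc)
      have hdel : π (ρ.eraseIdx j) = π ρ * s i := by
        rw [← wordProd_mul_getD_rightInvSeq, List.getD_eq_getElem _ _ hj, hjt]
      have hjρ : j < ρ.length := by simpa using hj
      refine ⟨ρ.eraseIdx j, List.Subset.trans List.eraseIdx_subset hsub, ?_, by rw [hdel, hωi]⟩
      rw [IsReduced, hdel, List.length_eraseIdx, if_pos hjρ, ← hρ]
      omega

theorem exists_isReduced_of_mem_parabolic {K : Set B} {z : W} (hz : z ∈ cs.parabolic K) :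
    ∃ ω : List B, (∀ i ∈ ω, i ∈ K) ∧ cs.IsReduced ω ∧ π ω = z := by
  obtain ⟨ω, hωK, rfl⟩ := cs.exists_wordProd_eq_of_mem_parabolic hz
  obtain ⟨ρ, hρω, hρ, hπ⟩ := cs.exists_isReduced_subset ω
  exact ⟨ρ, fun i hi => hωK i (hρω hi), hρ, hπ⟩

theorem eq_of_isLongest_parabolic {K : Set B} {x y : W} (hx : x ∈ cs.parabolic K)
    (hy : y ∈ cs.parabolic K) (hx_max : ∀ z ∈ cs.parabolic K, ℓ z ≤ ℓ x)
    (hy_max : ∀ z ∈ cs.parabolic K, ℓ z ≤ ℓ y) : x = y := by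
  classical
  have key : ∀ g ∈ cs.parabolic K, (∀ z ∈ cs.parabolic K, ℓ z ≤ ℓ g) → ∀ t, cs.IsReflection t →
      cs.inversionParity g t = if t ∈ cs.parabolic K then 1 else 0 := by
    intro g hg hg_max t ht
    split_ifs with htK
    · have := hg_max _ (mul_mem hg htK)
      have := ht.length_mul_left_ne g
      exact (cs.inversionParity_eq_one_iff ht).mpr (by omega)
    · rcases ZMod.eq_zero_or_eq_one_of_two (cs.inversionParity g t) with h | h
      · exact h
      · exact absurd (cs.mem_parabolic_of_inversionParity_eq_one hg h) htK
  exact cs.eq_of_inversionParity_eq fun t ht => by rw [key x hx hx_max t ht, key y hy hy_max t ht]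

theorem length_mul_of_forall_length_le_mul {K : Set B} {u : W}
    (hu : ∀ z ∈ cs.parabolic K, ℓ u ≤ ℓ (u * z)) {z : W} (hz : z ∈ cs.parabolic K) :
    ℓ (u * z) = ℓ u + ℓ z := by
  classical
  obtain ⟨ω, hωK, hω, rfl⟩ := cs.exists_isReduced_of_mem_parabolic hz
  clear hz
  induction ω using List.reverseRecOn with
  | nil => simp
  | append_singleton ω i ih =>
    have hωK' : ∀ j ∈ ω, j ∈ K := fun j hj => hωK j (List.mem_append_left _ hj)
    have hπω := cs.wordProd_mem_parabolic hωK'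
    have hω' : cs.IsReduced ω := by simpa using hω.take ω.length
    rw [IsReduced, wordProd_append, wordProd_singleton, List.length_append, List.length_singleton,
      ← hω'] at hω
    have hsi := cs.isReflection_simple i
    have hrefl := hsi.conj (π ω)
    -- `π ω * s i * (π ω)⁻¹ ∈ W_K` cannot be an inversion of `u`, by minimality of `u` in `u W_K`
    have ht : cs.inversionParity u (π ω * s i * (π ω)⁻¹) = 0 := by
      have := hu _ (mul_mem (mul_mem hπω (cs.simple_mem_parabolic (hωK i (by simp))))
        (inv_mem hπω))
      have := hrefl.length_mul_left_ne u
      exact (cs.inversionParity_eq_zero_iff hrefl).mpr (by omega)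
    have hup : ℓ (u * π ω) < ℓ (u * π ω * s i) := by
      rw [← cs.inversionParity_eq_zero_iff hsi, inversionParity_mul,
        (cs.inversionParity_eq_zero_iff hsi).mpr (by omega), ht, add_zero]
    have := cs.length_mul_simple (u * π ω) i
    have := ih hωK' hω'
    rw [wordProd_append, wordProd_singleton, ← mul_assoc, hω]
    omega

theorem length_mul_of_mem_minReps {K : Set B} {u z : W} (hu : u ∈ cs.minReps K)
    (hz : z ∈ cs.parabolic K) : ℓ (u * z) = ℓ u + ℓ z := by
  obtain ⟨z₀, hz₀, hmin⟩ :
      ∃ z₀ ∈ cs.parabolic K, ∀ z ∈ cs.parabolic K, ℓ (u * z₀) ≤ ℓ (u * z) :=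
    ⟨_, Function.argminOn_mem _ _ ⟨1, one_mem _⟩,
      fun z hz => Function.argminOn_le (fun z => ℓ (u * z)) _ hz⟩
  have hadd : ∀ z ∈ cs.parabolic K, ℓ (u * z₀ * z) = ℓ (u * z₀) + ℓ z := fun z hz =>
    cs.length_mul_of_forall_length_le_mul
      (fun z' hz' => by rw [mul_assoc]; exact hmin _ (mul_mem hz₀ hz')) hz
  suffices z₀ = 1 by simpa [this] using hadd z hz
  -- otherwise the last letter of a reduced word for `z₀⁻¹` is a descent of `u = u z₀ z₀⁻¹` in `K`
  obtain ⟨ω, hωK, hω, hπ⟩ := cs.exists_isReduced_of_mem_parabolic (inv_mem hz₀)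
  rcases List.eq_nil_or_concat ω with rfl | ⟨ω, i, rfl⟩
  · simpa using hπ.symm
  · exfalso
    rw [List.concat_eq_append] at hωK hω hπ
    have hω' : cs.IsReduced ω := by simpa using hω.take ω.length
    have h₁ := hadd _ (inv_mem hz₀)
    have h₂ := hadd (π ω) (cs.wordProd_mem_parabolic fun j hj => hωK j (List.mem_append_left _ hj))
    have h₃ := hu i (hωK i (by simp))
    rw [mul_inv_cancel_right, ← hπ, hω, List.length_append, List.length_singleton] at h₁
    have hz₀ω : z₀ * π ω = s i := by
      rw [← inv_inv z₀, ← hπ, wordProd_append, wordProd_singleton, mul_inv_rev, inv_simple,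
        mul_assoc, inv_mul_cancel, mul_one]
    rw [mul_assoc, hz₀ω, hω'] at h₂
    omega

theorem eq_of_mem_minReps {K : Set B} {u v : W} (hu : u ∈ cs.minReps K) (hv : v ∈ cs.minReps K)
    (huv : u⁻¹ * v ∈ cs.parabolic K) : u = v := by
  have h₁ := cs.length_mul_of_mem_minReps hu huv
  have h₂ := cs.length_mul_of_mem_minReps hv (inv_mem huv)
  rw [mul_inv_cancel_left] at h₁
  rw [mul_inv_rev, inv_inv, mul_inv_cancel_left] at h₂
  have h₃ : ℓ (v⁻¹ * u) = ℓ (u⁻¹ * v) := by rw [← length_inv, mul_inv_rev, inv_inv]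
  exact inv_mul_eq_one.mp (cs.length_eq_zero_iff.mp (by omega))

namespace IsProjFamily

variable {cs} {P : Set B → W → W}

theorem apply_eq (hP : cs.IsProjFamily P) {K : Set B} {u w : W} (hu : u ∈ cs.minReps K)
    (huw : u⁻¹ * w ∈ cs.parabolic K) : P K w = u := by
  refine cs.eq_of_mem_minReps (hP K w).1 hu ?_
  rw [show (P K w)⁻¹ * u = (P K w)⁻¹ * w * (u⁻¹ * w)⁻¹ by group]
  exact mul_mem (hP K w).2 (inv_mem huw)

theorem apply_mem_parabolic (hP : cs.IsProjFamily P) {J K : Set B} (hJK : J ⊆ K) {a : W}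
    (ha : a ∈ cs.parabolic K) : P J a ∈ cs.parabolic K := by
  rw [show P J a = a * ((P J a)⁻¹ * a)⁻¹ by group]
  exact mul_mem ha (inv_mem (cs.parabolic_mono hJK (hP J a).2))

theorem apply_mul (hP : cs.IsProjFamily P) {J K : Set B} (hJK : J ⊆ K) {u a : W}
    (hu : u ∈ cs.minReps K) (ha : a ∈ cs.parabolic K) : P J (u * a) = u * P J a := by
  have hb := hP.apply_mem_parabolic hJK ha
  refine hP.apply_eq (fun j hj => ?_) (by simpa [mul_assoc] using (hP J a).2)
  have h₁ := cs.length_mul_of_mem_minReps hu hb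
  have h₂ := cs.length_mul_of_mem_minReps hu (mul_mem hb (cs.simple_mem_parabolic (hJK hj)))
  have h₃ := (hP J a).1 j hj
  rw [mul_assoc]
  omega

end IsProjFamily

end CoxeterSystem

theorem stmt_6_general (cs : CoxeterSystem M W) (P : Set B → W → W)
    (hP : cs.IsProjFamily P) (I J : Set B)
    (w₀ : W) (hw₀ : ∀ u : W, cs.length u ≤ cs.length w₀)
    (w₀IJ : W) (hw₀IJ : w₀IJ ∈ cs.parabolic (I ∪ J))
    (hw₀IJmax : ∀ u ∈ cs.parabolic (I ∪ J), cs.length u ≤ cs.length w₀IJ) :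
    P I (P J w₀) = P (I ∪ J) w₀ * P I (P J w₀IJ) := by
  obtain ⟨hu, hv⟩ := hP (I ∪ J) w₀
  set u := P (I ∪ J) w₀
  have hv_max : ∀ z ∈ cs.parabolic (I ∪ J), cs.length z ≤ cs.length (u⁻¹ * w₀) := by
    intro z hz
    have h₁ := hw₀ (u * z)
    have h₂ := cs.length_mul_of_mem_minReps hu hv
    rw [cs.length_mul_of_mem_minReps hu hz] at h₁
    rw [mul_inv_cancel_left] at h₂
    omega
  have hw₀_eq : w₀ = u * w₀IJ := by
    rw [← cs.eq_of_isLongest_parabolic hv hw₀IJ hv_max hw₀IJmax, mul_inv_cancel_left]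
  rw [hw₀_eq, hP.apply_mul Set.subset_union_right hu hw₀IJ,
    hP.apply_mul Set.subset_union_left hu (hP.apply_mem_parabolic Set.subset_union_right hw₀IJ)]

theorem stmt_6 (cs : CoxeterSystem M W) [Finite W] (P : Set B → W → W)
    (hP : cs.IsProjFamily P) (I J : Set B)
    (w₀ : W) (hw₀ : ∀ u : W, cs.length u ≤ cs.length w₀)
    (w₀IJ : W) (hw₀IJ : w₀IJ ∈ cs.parabolic (I ∪ J))
    (hw₀IJmax : ∀ u ∈ cs.parabolic (I ∪ J), cs.length u ≤ cs.length w₀IJ) :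
    P I (P J w₀) = P (I ∪ J) w₀ * P I (P J w₀IJ) :=
  stmt_6_general cs P hP I J w₀ hw₀ w₀IJ hw₀IJ hw₀IJmax
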